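/- (Theorem 3.3(i); full high-energy expansion of the scattering amplitude, d=1.) For every M ∈ ℕ there exist constants C > 0 and κ₀ > 0 such that for all κ ≥ κ₀ the matrix A(κ) is invertible and for all k, ℓ ∈ {−κ, κ} one has |f(k,ℓ) + (1/(2π)) Σ_{m=0}^M C_m(k,ℓ) κ^{−m}| ≤ C κ^{−M−1}. -/

import Mathlib

open Complex Finset Matrix

noncomputable section

/-- The matrix `A(κ)` for a one-dimensional multipoint potential:
`A(κ)_{jj} = α_j + 1/(2iκ)`, `A(κ)_{jj'} = e^{iκ|y_j - y_{j'}|}/(2iκ)` for `j ≠ j'`. -/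
def A1 (n : ℕ) (y : Fin n → ℝ) (α : Fin n → ℂ) (κ : ℝ) : Matrix (Fin n) (Fin n) ℂ :=
  fun j j' => (if j = j' then α j else 0) +
    Complex.exp (Complex.I * κ * |y j - y j'|) / (2 * Complex.I * κ)

/-- `q(k) = A(κ)⁻¹ b(k)` with `b(k)_j = -e^{i k y_j}`. -/
def q1 (n : ℕ) (y : Fin n → ℝ) (α : Fin n → ℂ) (κ k : ℝ) : Fin n → ℂ :=
  (A1 n y α κ)⁻¹ *ᵥ fun j => -Complex.exp (Complex.I * k * y j)

/-- The scattering amplitude `f(k,ℓ) = (2π)⁻¹ Σ_j q_j(k) e^{-iℓ y_j}`. -/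
def f1 (n : ℕ) (y : Fin n → ℝ) (α : Fin n → ℂ) (κ k ℓ : ℝ) : ℂ :=
  (2 * Real.pi : ℂ)⁻¹ * ∑ j, q1 n y α κ k j * Complex.exp (-Complex.I * ℓ * y j)

/-- The matrix `W(κ)` with `W(κ)_{jj'} = (i/2) α_j⁻¹ e^{iκ|y_j - y_{j'}|}`. -/
def W1 (n : ℕ) (y : Fin n → ℝ) (α : Fin n → ℂ) (κ : ℝ) : Matrix (Fin n) (Fin n) ℂ :=
  fun j j' => Complex.I / 2 * (α j)⁻¹ * Complex.exp (Complex.I * κ * |y j - y j'|)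

/-- The coefficients `C_m(k,ℓ) = Σ_{j,j'} [W(κ)^m]_{jj'} α_{j'}⁻¹ e^{i(k y_{j'} - ℓ y_j)}`. -/
def C1coef (n : ℕ) (y : Fin n → ℝ) (α : Fin n → ℂ) (κ : ℝ) (m : ℕ) (k ℓ : ℝ) : ℂ :=
  ∑ j, ∑ j', (W1 n y α κ ^ m) j j' * (α j')⁻¹ *
    Complex.exp (Complex.I * (k * y j' - ℓ * y j))

/-!
`A(κ)` factors as `diag(α) (1 - W(κ)/κ)` with `‖W(κ)‖` bounded uniformly in `κ`, so for large `κ`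
the Neumann series inverts `A(κ)`. Sandwiched between the plane waves `e^{iky}` and `e^{-iℓy}`,
`A(κ)⁻¹` gives `-2π f(k,ℓ)` and the `m`-th term of the series gives `C_m(k,ℓ) κ^{-m}`; the tail
after `M + 1` terms is `O(κ^{-M-1})`.
-/

open scoped Matrix.Norms.Operator

lemma norm_geom_sum_sub_inverse_one_sub_le {R : Type*} [NormedRing R] [HasSummableGeomSeries R]
    (N : ℕ) {t : R} (ht : ‖t‖ ≤ 2⁻¹) :
    ‖∑ i ∈ range (N + 1), t ^ i - Ring.inverse (1 - t)‖ ≤ (‖(1 : R)‖ + 1) * ‖t‖ ^ (N + 1) := by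
  have ht1 : ‖t‖ < 1 := ht.trans_lt (by norm_num)
  have hinv : ‖Ring.inverse (1 - t)‖ ≤ ‖(1 : R)‖ + 1 := by
    have : (1 - ‖t‖)⁻¹ ≤ 2 := by
      rw [inv_le_comm₀ (by linarith) two_pos]
      linarith
    rw [show Ring.inverse (1 - t) = ∑' i, t ^ i from NormedRing.inverse_one_sub t ht1]
    linarith [tsum_geometric_le_of_norm_lt_one t ht1]
  rw [NormedRing.inverse_one_sub_nth_order' (N + 1) ht1, sub_add_cancel_left, norm_neg]
  calc ‖t ^ (N + 1) * Ring.inverse (1 - t)‖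
      ≤ ‖t‖ ^ (N + 1) * ‖Ring.inverse (1 - t)‖ :=
        (norm_mul_le _ _).trans <| by gcongr; exact norm_pow_le' t N.succ_pos
    _ ≤ (‖(1 : R)‖ + 1) * ‖t‖ ^ (N + 1) := by rw [mul_comm]; gcongr

namespace Matrix

variable {m n α : Type*} [Fintype m] [Fintype n]

lemma linfty_opNorm_le_card_mul [SeminormedAddCommGroup α] (A : Matrix m n α) {c : ℝ}
    (hc0 : 0 ≤ c) (hc : ∀ i j, ‖A i j‖ ≤ c) : ‖A‖ ≤ Fintype.card n * c := by
  lift c to NNReal using hc0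
  have : ‖A‖₊ ≤ Fintype.card n * c := by
    rw [linfty_opNNNorm_def]
    exact Finset.sup_le fun i _ =>
      (Finset.sum_le_sum fun j _ => (mod_cast hc i j : ‖A i j‖₊ ≤ c)).trans (by simp)
  exact_mod_cast this

lemma norm_dotProduct_mulVec_le [SeminormedRing α] {v : m → α} {u : n → α}
    (hv : ∀ i, ‖v i‖ ≤ 1) (hu : ∀ j, ‖u j‖ ≤ 1) (X : Matrix m n α) :
    ‖v ⬝ᵥ X *ᵥ u‖ ≤ Fintype.card m * ‖X‖ := by
  have hXu : ‖X *ᵥ u‖ ≤ ‖X‖ :=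
    (linfty_opNorm_mulVec X u).trans <| mul_le_of_le_one_right (norm_nonneg X)
      ((pi_norm_le_iff_of_nonneg zero_le_one).2 hu)
  calc ‖v ⬝ᵥ X *ᵥ u‖ ≤ ∑ i, ‖v i * (X *ᵥ u) i‖ := norm_sum_le _ _
    _ ≤ ∑ _i : m, ‖X‖ := Finset.sum_le_sum fun i _ =>
        (norm_mul_le _ _).trans <| (mul_le_of_le_one_left (norm_nonneg _) (hv i)).trans <|
          (norm_le_pi_norm _ i).trans hXu
    _ = Fintype.card m * ‖X‖ := by simp

end Matrix

section PointScatterers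

variable {n : ℕ} (y : Fin n → ℝ) (α : Fin n → ℂ)

def planeWave (k : ℝ) : Fin n → ℂ := fun j => exp (I * k * y j)

lemma norm_planeWave (k : ℝ) (j : Fin n) : ‖planeWave y k j‖ = 1 := by
  simp [planeWave, Complex.norm_exp]

lemma sum_mul_exp_eq_dotProduct_mulVec (X : Matrix (Fin n) (Fin n) ℂ) (k ℓ : ℝ) :
    ∑ j, ∑ j', X j j' * exp (I * (k * y j' - ℓ * y j)) =
      planeWave y (-ℓ) ⬝ᵥ X *ᵥ planeWave y k := by
  simp only [dotProduct, mulVec, Finset.mul_sum, planeWave]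
  refine Finset.sum_congr rfl fun j _ => Finset.sum_congr rfl fun j' _ => ?_
  rw [mul_left_comm (cexp _), ← Complex.exp_add]
  congr 2
  push_cast
  ring

lemma sum_q1_mul_exp (κ k ℓ : ℝ) :
    ∑ j, q1 n y α κ k j * exp (-I * ℓ * y j) =
      -(planeWave y (-ℓ) ⬝ᵥ (A1 n y α κ)⁻¹ *ᵥ planeWave y k) := by
  rw [← dotProduct_neg, ← mulVec_neg, dotProduct_comm]
  simp only [dotProduct, q1, planeWave, Complex.ofReal_neg, mul_neg, neg_mul]
  rfl

lemma C1coef_eq_dotProduct (κ : ℝ) (m : ℕ) (k ℓ : ℝ) :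
    C1coef n y α κ m k ℓ =
      planeWave y (-ℓ) ⬝ᵥ (W1 n y α κ ^ m * diagonal α⁻¹) *ᵥ planeWave y k := by
  simp only [C1coef, ← sum_mul_exp_eq_dotProduct_mulVec, mul_diagonal, Pi.inv_apply]

lemma inv_diagonal_eq (hα : ∀ j, α j ≠ 0) : (diagonal α)⁻¹ = diagonal α⁻¹ :=
  inv_eq_right_inv <| by
    rw [diagonal_mul_diagonal, ← diagonal_one]
    exact congrArg diagonal (funext fun j => mul_inv_cancel₀ (hα j))

lemma A1_eq_diagonal_mul {κ : ℝ} (hκ : κ ≠ 0) (hα : ∀ j, α j ≠ 0) :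
    A1 n y α κ = diagonal α * (1 - (κ : ℂ)⁻¹ • W1 n y α κ) := by
  ext i j
  have hκ' : (κ : ℂ) ≠ 0 := by exact_mod_cast hκ
  have hW : α i * ((κ : ℂ)⁻¹ * W1 n y α κ i j) =
      -(exp (I * κ * |y i - y j|) / (2 * I * κ)) := by
    simp only [W1]
    field_simp [hα i]
    ring_nf
    simp
  simp only [A1, diagonal_mul, Matrix.sub_apply, Matrix.smul_apply, Matrix.one_apply, smul_eq_mul,
    mul_sub, hW]
  split_ifs <;> ring

lemma f1_add_sum_C1coef_div_pow (M : ℕ) (κ k ℓ : ℝ) :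
    f1 n y α κ k ℓ + (2 * Real.pi : ℂ)⁻¹ *
        ∑ m ∈ range (M + 1), C1coef n y α κ m k ℓ / (κ : ℂ) ^ m =
      (2 * Real.pi : ℂ)⁻¹ * (planeWave y (-ℓ) ⬝ᵥ
        ((∑ m ∈ range (M + 1), ((κ : ℂ)⁻¹ • W1 n y α κ) ^ m) * diagonal α⁻¹ -
          (A1 n y α κ)⁻¹) *ᵥ planeWave y k) := by
  have hC (m : ℕ) : C1coef n y α κ m k ℓ / (κ : ℂ) ^ m =
      planeWave y (-ℓ) ⬝ᵥ (((κ : ℂ)⁻¹ • W1 n y α κ) ^ m * diagonal α⁻¹) *ᵥ planeWave y k := by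
    rw [C1coef_eq_dotProduct, smul_pow, smul_mul, smul_mulVec, dotProduct_smul, smul_eq_mul,
      inv_pow, div_eq_inv_mul]
  rw [f1, sum_q1_mul_exp, Finset.sum_congr rfl fun m _ => hC m, ← dotProduct_sum, ← sum_mulVec,
    ← Finset.sum_mul, sub_mulVec, dotProduct_sub]
  ring

lemma norm_W1_le (κ : ℝ) : ‖W1 n y α κ‖ ≤ n * ‖α⁻¹‖ / 2 := by
  have hentry (i j : Fin n) : ‖W1 n y α κ i j‖ ≤ ‖α⁻¹‖ / 2 :=
    calc ‖W1 n y α κ i j‖ = ‖α⁻¹ i‖ / 2 := by simp [W1, Complex.norm_exp, div_eq_inv_mul]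
      _ ≤ ‖α⁻¹‖ / 2 := by gcongr; exact norm_le_pi_norm α⁻¹ i
  simpa [mul_div_assoc] using linfty_opNorm_le_card_mul _ (by positivity) hentry

lemma norm_inv_smul_W1_le {κ : ℝ} (hκ : 0 < κ) :
    ‖(κ : ℂ)⁻¹ • W1 n y α κ‖ ≤ n * ‖α⁻¹‖ / 2 / κ := by
  rw [norm_smul, norm_inv, Complex.norm_real, Real.norm_of_nonneg hκ.le, inv_mul_eq_div]
  gcongr
  exact norm_W1_le y α κ

variable {y α} in
lemma norm_inv_smul_W1_le_half {κ : ℝ} (hκ : 0 < κ) (hκα : n * ‖α⁻¹‖ ≤ κ) :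
    ‖(κ : ℂ)⁻¹ • W1 n y α κ‖ ≤ 2⁻¹ := by
  refine (norm_inv_smul_W1_le y α hκ).trans ?_
  rw [div_le_iff₀ hκ]
  linarith

lemma isUnit_A1 (hα : ∀ j, α j ≠ 0) {κ : ℝ} (hκ : 0 < κ) (hκα : n * ‖α⁻¹‖ ≤ κ) :
    IsUnit (A1 n y α κ) := by
  rw [A1_eq_diagonal_mul y α hκ.ne' hα]
  refine IsUnit.mul ?_ (isUnit_one_sub_of_norm_lt_one ?_)
  · exact isUnit_diagonal.2 (Pi.isUnit_iff.2 fun j => (hα j).isUnit)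
  · exact (norm_inv_smul_W1_le_half hκ hκα).trans_lt (by norm_num)

lemma norm_geom_sum_mul_sub_inv_A1_le (hα : ∀ j, α j ≠ 0) (M : ℕ) {κ : ℝ} (hκ : 0 < κ)
    (hκα : n * ‖α⁻¹‖ ≤ κ) :
    ‖(∑ m ∈ range (M + 1), ((κ : ℂ)⁻¹ • W1 n y α κ) ^ m) * diagonal α⁻¹ - (A1 n y α κ)⁻¹‖ ≤
      (‖(1 : Matrix (Fin n) (Fin n) ℂ)‖ + 1) * (n * ‖α⁻¹‖ / 2) ^ (M + 1) * ‖α⁻¹‖ /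
        κ ^ (M + 1) := by
  set t := (κ : ℂ)⁻¹ • W1 n y α κ
  have hA : (A1 n y α κ)⁻¹ = Ring.inverse (1 - t) * diagonal α⁻¹ := by
    rw [A1_eq_diagonal_mul y α hκ.ne' hα, Matrix.mul_inv_rev, inv_diagonal_eq α hα,
      nonsing_inv_eq_ringInverse]
  rw [hA, ← sub_mul]
  calc ‖(∑ m ∈ range (M + 1), t ^ m - Ring.inverse (1 - t)) * diagonal α⁻¹‖
      ≤ (‖(1 : Matrix (Fin n) (Fin n) ℂ)‖ + 1) * ‖t‖ ^ (M + 1) * ‖α⁻¹‖ := by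
        refine (norm_mul_le _ _).trans ?_
        rw [linfty_opNorm_diagonal]
        gcongr
        exact norm_geom_sum_sub_inverse_one_sub_le M (norm_inv_smul_W1_le_half hκ hκα)
    _ ≤ (‖(1 : Matrix (Fin n) (Fin n) ℂ)‖ + 1) * (n * ‖α⁻¹‖ / 2 / κ) ^ (M + 1) * ‖α⁻¹‖ := by
        gcongr
        exact norm_inv_smul_W1_le y α hκ
    _ = _ := by rw [div_pow]; ring

end PointScatterers

theorem stmt3_general (n : ℕ) (y : Fin n → ℝ) (α : Fin n → ℂ)
    (hα : ∀ j, α j ≠ 0) (M : ℕ) :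
    ∃ C > (0 : ℝ), ∃ κ₀ > (0 : ℝ), ∀ κ ≥ κ₀, IsUnit (A1 n y α κ) ∧
      ∀ k ℓ : ℝ, (k = κ ∨ k = -κ) → (ℓ = κ ∨ ℓ = -κ) →
        ‖f1 n y α κ k ℓ + (2 * Real.pi : ℂ)⁻¹ *
            ∑ m ∈ Finset.range (M + 1), C1coef n y α κ m k ℓ / (κ : ℂ) ^ m‖ ≤
          C / κ ^ (M + 1) := by
  set K := (2 * Real.pi)⁻¹ * (n * ((‖(1 : Matrix (Fin n) (Fin n) ℂ)‖ + 1) *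
    (n * ‖α⁻¹‖ / 2) ^ (M + 1) * ‖α⁻¹‖))
  refine ⟨K + 1, by positivity, n * ‖α⁻¹‖ + 1, by positivity, fun κ hκ => ?_⟩
  have hκ0 : 0 < κ := by linarith [show 0 ≤ n * ‖α⁻¹‖ by positivity]
  have hκα : n * ‖α⁻¹‖ ≤ κ := by linarith
  refine ⟨isUnit_A1 y α hα hκ0 hκα, fun k ℓ _ _ => ?_⟩
  have h2π : ‖(2 * Real.pi : ℂ)⁻¹‖ = (2 * Real.pi)⁻¹ := by
    rw [norm_inv, norm_mul, Complex.norm_real, Real.norm_of_nonneg Real.pi_pos.le]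
    norm_num
  rw [f1_add_sum_C1coef_div_pow, norm_mul, h2π]
  calc _ ≤ (2 * Real.pi)⁻¹ * (n * ((‖(1 : Matrix (Fin n) (Fin n) ℂ)‖ + 1) *
          (n * ‖α⁻¹‖ / 2) ^ (M + 1) * ‖α⁻¹‖ / κ ^ (M + 1))) := by
        gcongr
        refine (norm_dotProduct_mulVec_le (fun j => (norm_planeWave y _ j).le)
          (fun j => (norm_planeWave y _ j).le) _).trans ?_
        rw [Fintype.card_fin]
        gcongr
        exact norm_geom_sum_mul_sub_inv_A1_le y α hα M hκ0 hκα
    _ = K / κ ^ (M + 1) := by ring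
    _ ≤ (K + 1) / κ ^ (M + 1) := by gcongr; linarith

/-- Theorem 3.3(i): full high-energy expansion of the scattering amplitude, d = 1. -/
theorem stmt3 (n : ℕ) (y : Fin n → ℝ) (α : Fin n → ℂ)
    (hy : Function.Injective y) (hα : ∀ j, α j ≠ 0) (M : ℕ) :
    ∃ C > (0 : ℝ), ∃ κ₀ > (0 : ℝ), ∀ κ ≥ κ₀, IsUnit (A1 n y α κ) ∧
      ∀ k ℓ : ℝ, (k = κ ∨ k = -κ) → (ℓ = κ ∨ ℓ = -κ) →
        ‖f1 n y α κ k ℓ + (2 * Real.pi : ℂ)⁻¹ *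
            ∑ m ∈ Finset.range (M + 1), C1coef n y α κ m k ℓ / (κ : ℂ) ^ m‖ ≤
          C / κ ^ (M + 1) :=
  stmt3_general n y α hα M
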